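/- For every partition λ of n and every binary sequence b ∈ 𝔹_{n−2}, the recursion φ_{λ,b}(T) = (φ_{μ,b_†}(d(T)))^+ if b_1 = 0, and φ_{λ,b}(T) = (φ_{μ,ol(b_†)}(d(ev(T))))^+ if b_1 = 1 (where μ = sh(d(T)) or sh(d(ev(T))) respectively), is well defined and yields a bijection φ_{λ,b} : SYT(λ) → SYT(λ). -/

import Mathlib

/-!
Common combinatorial background: standard Young tableaux encoded as chains of
Young diagrams, the box-removal map `d`, box-addition `up`, the row statistic
`ε_k`, binary sequences (as functions `ℕ → Bool`), the generalised bijections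
`phi` and partial orders `leB` of Definition 4.1, and interval parabolic
subgroups of symmetric groups.
-/

open scoped BigOperators

/-- A standard Young tableau with `n` boxes, encoded as the chain of Young
diagrams `∅ = chain 0 ⊂ chain 1 ⊂ ⋯ ⊂ chain n`, where `chain k` is the shape
occupied by the entries `1, …, k`. -/
structure SYT (n : ℕ) where
  chain : ℕ → YoungDiagram
  chain_zero : chain 0 = ⊥
  chain_mono : ∀ k, chain k ≤ chain (k + 1)
  chain_card : ∀ k, k ≤ n → (chain k).card = k
  chain_stable : ∀ k, n ≤ k → chain k = chain n

namespace SYT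

/-- The shape of a standard Young tableau. -/
def shape {n : ℕ} (T : SYT n) : YoungDiagram := T.chain n

lemma chain_monotone {n : ℕ} (T : SYT n) : Monotone T.chain :=
  monotone_nat_of_le_succ T.chain_mono

/-- `ε_k(T)`: the (0-indexed) row of `T` containing the entry `k`. -/
noncomputable def row {n : ℕ} (T : SYT n) (k : ℕ) : ℕ :=
  sInf {i | ∃ j, (i, j) ∈ T.chain k ∧ (i, j) ∉ T.chain (k - 1)}

/-- `d(T)`: the tableau obtained from `T` by removing the box containing the
largest entry. -/
def d {n : ℕ} (T : SYT (n + 1)) : SYT n where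
  chain k := T.chain (min k n)
  chain_zero := by simpa using T.chain_zero
  chain_mono k := T.chain_monotone (by omega)
  chain_card k hk := by
    show (T.chain (min k n)).card = k
    rw [min_eq_left hk]; exact T.chain_card k (by omega)
  chain_stable k hk := by
    show T.chain (min k n) = T.chain (min n n)
    rw [min_eq_right hk, min_self]

/-- The one-row Young diagram with `m` cells. -/
def rowDiagram (m : ℕ) : YoungDiagram where
  cells := (Finset.range m).map ⟨fun j => (0, j), fun a b h => by simpa using h⟩
  isLowerSet := by
    rintro ⟨x1, x2⟩ ⟨y1, y2⟩ ⟨h1, h2⟩ hx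
    simp only [Finset.coe_map, Function.Embedding.coeFn_mk, Set.mem_image,
      Finset.mem_coe, Finset.mem_range, Prod.mk.injEq] at hx ⊢
    obtain ⟨j, hj, hj'⟩ := hx
    simp only [Function.Embedding.coeFn_mk, Prod.mk.injEq] at hj' h1 h2
    obtain ⟨rfl, rfl⟩ := hj'
    exact ⟨y2, by omega, show (0, y2) = (y1, y2) by congr 1; simp at h1; omega⟩

lemma rowDiagram_card (m : ℕ) : (rowDiagram m).card = m := by
  simp [rowDiagram, YoungDiagram.card]

lemma rowDiagram_mono {a b : ℕ} (h : a ≤ b) : rowDiagram a ≤ rowDiagram b := by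
  intro x hx
  simp only [rowDiagram, YoungDiagram.mem_mk, Finset.mem_coe, Finset.mem_map,
    Function.Embedding.coeFn_mk, Finset.mem_range, SetLike.mem_coe] at hx ⊢
  change x ∈ Finset.map _ _ at hx ⊢
  simp only [Finset.mem_map, Function.Embedding.coeFn_mk, Finset.mem_range] at hx ⊢
  obtain ⟨j, hj, rfl⟩ := hx
  exact ⟨j, by omega, rfl⟩

lemma rowDiagram_zero : rowDiagram 0 = ⊥ := by
  ext x
  simp [rowDiagram, YoungDiagram.mem_mk]

/-- The one-row standard Young tableau with `n` boxes. -/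
def rowSYT (n : ℕ) : SYT n where
  chain k := rowDiagram (min k n)
  chain_zero := by simpa using rowDiagram_zero
  chain_mono k := rowDiagram_mono (by omega)
  chain_card k hk := by
    show (rowDiagram (min k n)).card = k
    rw [min_eq_left hk]; exact rowDiagram_card k
  chain_stable k hk := by
    show rowDiagram (min k n) = rowDiagram (min n n)
    rw [min_eq_right hk, min_self]

open Classical in
/-- `S⁺`: add a box containing the entry `n + 1` to `S` so that the resulting
tableau has shape `μ` (junk value if this is impossible). -/
noncomputable def up {n : ℕ} (S : SYT n) (μ : YoungDiagram) : SYT (n + 1) :=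
  if h : S.shape ≤ μ ∧ μ.card = n + 1 then
    { chain := fun k => if k ≤ n then S.chain k else μ
      chain_zero := by simpa using S.chain_zero
      chain_mono := by
        intro k
        show (if k ≤ n then S.chain k else μ) ≤ (if k + 1 ≤ n then S.chain (k + 1) else μ)
        rcases le_or_gt (k + 1) n with h2 | h2
        · rw [if_pos (by omega : k ≤ n), if_pos h2]
          exact S.chain_mono k
        · rw [if_neg (by omega : ¬ k + 1 ≤ n)]
          by_cases h1 : k ≤ n
          · rw [if_pos h1]
            have hkn : k = n := by omega
            subst hkn
            exact h.1
          · rw [if_neg h1]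
      chain_card := by
        intro k hk
        show (if k ≤ n then S.chain k else μ).card = k
        by_cases h1 : k ≤ n
        · rw [if_pos h1]; exact S.chain_card k h1
        · rw [if_neg h1]
          have : k = n + 1 := by omega
          rw [h.2, this]
      chain_stable := by
        intro k hk
        show (if k ≤ n then S.chain k else μ) = (if n + 1 ≤ n then S.chain (n + 1) else μ)
        rw [if_neg (by omega : ¬ k ≤ n), if_neg (by omega : ¬ n + 1 ≤ n)] }
  else rowSYT (n + 1)

end SYT

/-- Complementation of a binary sequence (`ol` in the paper, swapping `0` and `1`). -/
def olB (b : ℕ → Bool) : ℕ → Bool := fun i => !b i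

/-- Truncation `b ↦ b_† = b₂b₃⋯` of a binary sequence. -/
def shiftB (b : ℕ → Bool) : ℕ → Bool := fun i => b (i + 1)

/-- The generalised bijection `φ_{λ,b}` of Definition 4.1(1), defined (for an
arbitrary shape-preserving family of evacuation involutions `ev`) by
`φ_{λ,b}(T) = (φ_{μ,b_†}(d T))⁺` if `b₁ = 0` and
`φ_{λ,b}(T) = (φ_{μ,ol(b_†)}(d (ev T)))⁺` if `b₁ = 1`. -/
noncomputable def phiB (ev : ∀ m, SYT m → SYT m) : ∀ n : ℕ, (ℕ → Bool) → SYT n → SYT n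
  | 0, _, T => T
  | n + 1, b, T =>
    if b 0 then (phiB ev n (olB (shiftB b)) ((ev (n + 1) T).d)).up T.shape
    else (phiB ev n (shiftB b) T.d).up T.shape

/-- The generalised partial order `≤_{λ,b}` of Definition 4.1(2), defined
recursively (relative to a family of evacuation involutions `ev`). -/
noncomputable def leB (ev : ∀ m, SYT m → SYT m) : ∀ n : ℕ, (ℕ → Bool) → SYT n → SYT n → Prop
  | 0, _, _, _ => True
  | n + 1, b, S, T =>
    if b 0 then
      (ev (n + 1) S).row (n + 1) < (ev (n + 1) T).row (n + 1) ∨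
        ((ev (n + 1) S).row (n + 1) = (ev (n + 1) T).row (n + 1) ∧
          leB ev n (olB (shiftB b)) ((ev (n + 1) S).d) ((ev (n + 1) T).d))
    else
      S.row (n + 1) < T.row (n + 1) ∨
        (S.row (n + 1) = T.row (n + 1) ∧ leB ev n (shiftB b) S.d T.d)

/-- The strict order `<_{λ,b}`. -/
noncomputable def ltB (ev : ∀ m, SYT m → SYT m) (n : ℕ) (b : ℕ → Bool) (S T : SYT n) : Prop :=
  leB ev n b S T ∧ S ≠ T

/-- The standard parabolic subgroup `S_{[a,b]}` of `S_n` consisting of the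
permutations fixing every point outside the (1-indexed) interval `[a,b]`. -/
def intervalSubgroup (n a b : ℕ) : Subgroup (Equiv.Perm (Fin n)) where
  carrier := {σ | ∀ i : Fin n, (i.val + 1 < a ∨ b < i.val + 1) → σ i = i}
  one_mem' := fun _ _ => rfl
  mul_mem' := by
    intro σ τ hσ hτ i hi
    have : (σ * τ) i = σ (τ i) := rfl
    rw [this, hτ i hi, hσ i hi]
  inv_mem' := by
    intro σ hσ i hi
    conv_lhs => rw [← hσ i hi]
    exact σ.symm_apply_apply i

/-- The lower endpoints of the intervals in the multiplicity-free chain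
labelled by a binary sequence `b` (0-indexed: `chainLo b (m-1)` is the lower
endpoint of the interval `I_m`); `b m = true` means the smallest element is
removed at the `m`-th step. -/
def chainLo (b : ℕ → Bool) : ℕ → ℕ
  | 0 => 1
  | m + 1 => chainLo b m + (if b m then 1 else 0)

/-- The upper endpoints of the intervals in the multiplicity-free chain
labelled by a binary sequence `b`; `b m = false` means the largest element is
removed at the `m`-th step. -/
def chainHi (n : ℕ) (b : ℕ → Bool) : ℕ → ℕ
  | 0 => n
  | m + 1 => chainHi n b m - (if b m then 0 else 1)

/-!
Every ingredient of the recursion can be undone once the shape is known: `d` and `⁺` are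
mutually inverse (`(d T)⁺ = T` when the box is added back in the shape of `T`), and `ev` is a
shape-preserving involution. Running the recursion backwards therefore defines a map `ψ` that
preserves shapes and, by induction on `n`, is a two-sided inverse of `φ`.
-/

namespace SYT

lemma ext {n : ℕ} {S T : SYT n} (h : S.chain = T.chain) : S = T := by
  cases S; cases T; congr

lemma card_shape {n : ℕ} (T : SYT n) : T.shape.card = n := T.chain_card n le_rfl

lemma up_chain {n : ℕ} (S : SYT n) {μ : YoungDiagram} (hle : S.shape ≤ μ)
    (hcard : μ.card = n + 1) (k : ℕ) :
    (S.up μ).chain k = if k ≤ n then S.chain k else μ := by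
  rw [up, dif_pos ⟨hle, hcard⟩]

lemma shape_up {n : ℕ} (S : SYT n) {μ : YoungDiagram} (hle : S.shape ≤ μ)
    (hcard : μ.card = n + 1) : (S.up μ).shape = μ := by
  rw [shape, up_chain S hle hcard, if_neg (by omega)]

lemma shape_d_le {n : ℕ} (T : SYT (n + 1)) : T.d.shape ≤ T.shape := by
  change T.chain (min n n) ≤ T.chain (n + 1)
  exact T.chain_monotone (by omega)

lemma d_up {n : ℕ} (S : SYT n) {μ : YoungDiagram} (hle : S.shape ≤ μ)
    (hcard : μ.card = n + 1) : (S.up μ).d = S := by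
  refine SYT.ext (funext fun k => ?_)
  change (S.up μ).chain (min k n) = S.chain k
  rw [up_chain S hle hcard, if_pos (min_le_right k n)]
  rcases le_or_gt k n with h | h
  · rw [min_eq_left h]
  · rw [min_eq_right h.le, S.chain_stable k h.le]

lemma up_d {n : ℕ} (T : SYT (n + 1)) : T.d.up T.shape = T := by
  refine SYT.ext (funext fun k => ?_)
  rw [up_chain T.d (shape_d_le T) (card_shape T)]
  rcases le_or_gt k n with h | h
  · rw [if_pos h]
    exact congrArg T.chain (min_eq_left h)
  · rw [if_neg (by omega), T.chain_stable k h]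
    rfl

end SYT

open SYT

noncomputable def psiB (ev : ∀ m, SYT m → SYT m) : ∀ n : ℕ, (ℕ → Bool) → SYT n → SYT n
  | 0, _, T => T
  | n + 1, b, T =>
    if b 0 then ev (n + 1) ((psiB ev n (olB (shiftB b)) T.d).up T.shape)
    else (psiB ev n (shiftB b) T.d).up T.shape

section Inverse

variable {ev : ∀ m, SYT m → SYT m} (hev_shape : ∀ m (T : SYT m), (ev m T).shape = T.shape)
include hev_shape

lemma shape_phiB (n : ℕ) (b : ℕ → Bool) (T : SYT n) : (phiB ev n b T).shape = T.shape := by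
  induction n generalizing b with
  | zero => rfl
  | succ n ih =>
    cases hb : b 0
    · simp only [phiB, hb, Bool.false_eq_true, if_false]
      exact shape_up _ ((ih _ _).trans_le (shape_d_le T)) (card_shape T)
    · simp only [phiB, hb, if_true]
      have hle : (ev (n + 1) T).d.shape ≤ T.shape := (shape_d_le _).trans (hev_shape _ T).le
      exact shape_up _ ((ih _ _).trans_le hle) (card_shape T)

lemma shape_psiB (n : ℕ) (b : ℕ → Bool) (T : SYT n) : (psiB ev n b T).shape = T.shape := by
  induction n generalizing b with
  | zero => rfl
  | succ n ih =>
    cases hb : b 0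
    · simp only [psiB, hb, Bool.false_eq_true, if_false]
      exact shape_up _ ((ih _ _).trans_le (shape_d_le T)) (card_shape T)
    · simp only [psiB, hb, if_true]
      rw [hev_shape]
      exact shape_up _ ((ih _ _).trans_le (shape_d_le T)) (card_shape T)

variable (hev_invol : ∀ m, Function.Involutive (ev m))
include hev_invol

lemma phiB_psiB (n : ℕ) (b : ℕ → Bool) (T : SYT n) : phiB ev n b (psiB ev n b T) = T := by
  induction n generalizing b with
  | zero => rfl
  | succ n ih =>
    cases hb : b 0
    · simp only [phiB, psiB, hb, Bool.false_eq_true, if_false]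
      have hle := (shape_psiB hev_shape n (shiftB b) T.d).trans_le (shape_d_le T)
      rw [d_up _ hle (card_shape T), ih, shape_up _ hle (card_shape T), up_d]
    · simp only [phiB, psiB, hb, if_true]
      have hle := (shape_psiB hev_shape n (olB (shiftB b)) T.d).trans_le (shape_d_le T)
      rw [hev_invol, d_up _ hle (card_shape T), ih, hev_shape, shape_up _ hle (card_shape T),
        up_d]

lemma psiB_phiB (n : ℕ) (b : ℕ → Bool) (T : SYT n) : psiB ev n b (phiB ev n b T) = T := by
  induction n generalizing b with
  | zero => rfl
  | succ n ih =>
    cases hb : b 0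
    · simp only [phiB, psiB, hb, Bool.false_eq_true, if_false]
      have hle := (shape_phiB hev_shape n (shiftB b) T.d).trans_le (shape_d_le T)
      rw [d_up _ hle (card_shape T), ih, shape_up _ hle (card_shape T), up_d]
    · simp only [phiB, psiB, hb, if_true]
      have hle := (shape_phiB hev_shape n (olB (shiftB b)) (ev (n + 1) T).d).trans_le
        ((shape_d_le _).trans (hev_shape _ T).le)
      rw [d_up _ hle (card_shape T), ih, shape_up _ hle (card_shape T), ← hev_shape, up_d,
        hev_invol]

end Inverse

theorem phi_well_defined_and_bijective_general
    (n : ℕ) (lam : YoungDiagram) (b : ℕ → Bool)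
    (ev : ∀ m, SYT m → SYT m)
    (hev_shape : ∀ m (T : SYT m), (ev m T).shape = T.shape)
    (hev_invol : ∀ m, Function.Involutive (ev m)) :
    (∀ T : SYT n, T.shape = lam → (phiB ev n b T).shape = lam) ∧
    Set.BijOn (phiB ev n b) {T : SYT n | T.shape = lam} {T : SYT n | T.shape = lam} := by
  have hphi : ∀ T : SYT n, T.shape = lam → (phiB ev n b T).shape = lam :=
    fun T hT => (shape_phiB hev_shape n b T).trans hT
  have hpsi : Set.MapsTo (psiB ev n b) {T : SYT n | T.shape = lam} {T | T.shape = lam} :=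
    fun T hT => (shape_psiB hev_shape n b T).trans hT
  have hinv : Set.InvOn (psiB ev n b) (phiB ev n b) {T | T.shape = lam} {T | T.shape = lam} :=
    ⟨fun T _ => psiB_phiB hev_shape hev_invol n b T,
      fun T _ => phiB_psiB hev_shape hev_invol n b T⟩
  exact ⟨hphi, hinv.bijOn hphi hpsi⟩

theorem phi_well_defined_and_bijective
    (n : ℕ) (lam : YoungDiagram) (hlam : lam.card = n) (b : ℕ → Bool)
    (ev : ∀ m, SYT m → SYT m)
    (hev_shape : ∀ m (T : SYT m), (ev m T).shape = T.shape)
    (hev_invol : ∀ m, Function.Involutive (ev m)) :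
    (∀ T : SYT n, T.shape = lam → (phiB ev n b T).shape = lam) ∧
    Set.BijOn (phiB ev n b) {T : SYT n | T.shape = lam} {T : SYT n | T.shape = lam} :=
  phi_well_defined_and_bijective_general n lam b ev hev_shape hev_invol
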